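/- arXiv:2210.13208 — 2 statements merged into one kernel-verified Lean document; each statement's English description precedes it below -/
import Mathlib

section
/- For T, S ∈ B_{A^{1/2}}(H) and λ ∈ [0,1], the equality ‖T+S‖_{(A,λ)} = ‖T‖_{(A,λ)} + ‖S‖_{(A,λ)} holds if and only if there exists a sequence {x_n} of A-unit vectors in H such that lim_{n→∞} ( λ⟨Sx_n, Tx_n⟩_A + (1−λ)⟨x_n, Tx_n⟩_A ⟨Sx_n, x_n⟩_A ) = ‖T‖_{(A,λ)}·‖S‖_{(A,λ)} (the limit of the complex-valued expression equals this real number). -/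
/-!
Write `q_T(x) = √(λ‖Tx‖_A² + (1 - λ)|⟨Tx, x⟩_A|²)` and let `E(x)` be the cross term of the
statement. Expanding, `q_{T+S}(x)² = q_T(x)² + q_S(x)² + 2 Re E(x)`, and Cauchy–Schwarz (once for
`⟨·,·⟩_A`, once for the weights `λ, 1 - λ`) gives `|E(x)| ≤ q_T(x) q_S(x)`; hence
`q_{T+S} ≤ q_T + q_S`.
If `‖T + S‖ = ‖T‖ + ‖S‖`, a maximizing sequence for `T + S` must maximize `T` and `S` as well, so
`Re E → ‖T‖‖S‖` along it, and `|E| ≤ q_T q_S → ‖T‖‖S‖` kills the imaginary part. Conversely, if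
`E(x_n) → ‖T‖‖S‖` and both seminorms are positive, `q_T(x_n) ≥ Re E(x_n) / ‖S‖` forces
`q_T(x_n) → ‖T‖`, likewise for `S`, and then `q_{T+S}(x_n) → ‖T‖ + ‖S‖`. If `‖T‖ = 0`, then `q_T`
and `E` vanish on `A`-unit vectors and `‖T + S‖ = ‖S‖`.
-/

open Filter Topology

variable {H : Type*}

/-- The `A`-semi-inner product, paper convention (linear in the first argument):
`⟨x, y⟩_A = ⟨Ax, y⟩`. -/
noncomputable def innA [NormedAddCommGroup H] [InnerProductSpace ℂ H]
    (A : H →L[ℂ] H) (x y : H) : ℂ :=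
  @inner ℂ H _ y (A x)

/-- The seminorm `‖x‖_A = √⟨Ax, x⟩`. -/
noncomputable def normA [NormedAddCommGroup H] [InnerProductSpace ℂ H]
    (A : H →L[ℂ] H) (x : H) : ℝ :=
  Real.sqrt (innA A x x).re

/-- The quantity `√(λ‖Tx‖_A² + (1−λ)|⟨Tx,x⟩_A|²)`. -/
noncomputable def qA [NormedAddCommGroup H] [InnerProductSpace ℂ H]
    (A : H →L[ℂ] H) (l : ℝ) (T : H →L[ℂ] H) (x : H) : ℝ :=
  Real.sqrt (l * normA A (T x) ^ 2 + (1 - l) * ‖innA A (T x) x‖ ^ 2)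

/-- The seminorm `‖T‖_{(A,λ)}`. -/
noncomputable def semNormA [NormedAddCommGroup H] [InnerProductSpace ℂ H]
    (A : H →L[ℂ] H) (l : ℝ) (T : H →L[ℂ] H) : ℝ :=
  sSup {r : ℝ | ∃ x : H, normA A x = 1 ∧ r = qA A l T x}

open ComplexConjugate

section Limits

variable {ι : Type*} {f : Filter ι}

lemma tendsto_left_of_le_add {a b c : ι → ℝ} {α β : ℝ} (ha : ∀ i, a i ≤ α) (hb : ∀ i, b i ≤ β)
    (hc : ∀ i, c i ≤ a i + b i) (hlim : Tendsto c f (𝓝 (α + β))) : Tendsto a f (𝓝 α) := by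
  have hlow : Tendsto (fun i => c i - β) f (𝓝 α) := by simpa using hlim.sub_const β
  exact tendsto_of_tendsto_of_tendsto_of_le_of_le hlow tendsto_const_nhds
    (fun i => by linarith [hb i, hc i]) ha

lemma tendsto_left_of_le_mul {a b c : ι → ℝ} {α β : ℝ} (hβ : 0 < β) (ha₀ : ∀ i, 0 ≤ a i)
    (ha : ∀ i, a i ≤ α) (hb : ∀ i, b i ≤ β) (hc : ∀ i, c i ≤ a i * b i)
    (hlim : Tendsto c f (𝓝 (α * β))) : Tendsto a f (𝓝 α) := by
  have hlow : Tendsto (fun i => c i / β) f (𝓝 α) := by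
    simpa [mul_div_cancel_right₀ _ hβ.ne'] using hlim.div_const β
  refine tendsto_of_tendsto_of_tendsto_of_le_of_le hlow tendsto_const_nhds (fun i => ?_) ha
  rw [div_le_iff₀ hβ]
  exact (hc i).trans (mul_le_mul_of_nonneg_left (hb i) (ha₀ i))

lemma tendsto_ofReal_of_tendsto_re {z : ι → ℂ} {u : ι → ℝ} {r : ℝ}
    (hre : Tendsto (fun i => (z i).re) f (𝓝 r)) (hu : Tendsto u f (𝓝 r))
    (hle : ∀ i, ‖z i‖ ≤ u i) : Tendsto z f (𝓝 (r : ℂ)) := by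
  rw [tendsto_iff_norm_sub_tendsto_zero]
  have hsq : ∀ i, ‖z i - r‖ ^ 2 ≤ u i ^ 2 - 2 * r * (z i).re + r ^ 2 := by
    intro i
    have hz : ‖z i‖ ^ 2 ≤ u i ^ 2 := pow_le_pow_left₀ (norm_nonneg _) (hle i) 2
    rw [Complex.sq_norm, Complex.normSq_sub, ← Complex.sq_norm]
    simp only [Complex.conj_ofReal, Complex.re_mul_ofReal, Complex.normSq_ofReal]
    nlinarith
  have hlim : Tendsto (fun i => u i ^ 2 - 2 * r * (z i).re + r ^ 2) f (𝓝 0) := by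
    convert ((hu.pow 2).sub (hre.const_mul (2 * r))).add_const (r ^ 2) using 2
    ring
  have := (squeeze_zero (fun i => sq_nonneg _) hsq hlim).sqrt
  simpa [Real.sqrt_sq (norm_nonneg _)] using this

end Limits

lemma mul_add_one_sub_mul_le_sqrt_mul_sqrt {l : ℝ} (hl : l ∈ Set.Icc (0 : ℝ) 1) (a b c d : ℝ) :
    l * (a * c) + (1 - l) * (b * d)
      ≤ √(l * a ^ 2 + (1 - l) * b ^ 2) * √(l * c ^ 2 + (1 - l) * d ^ 2) := by
  obtain ⟨hl₀, hl₁⟩ := hl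
  rw [← Real.sqrt_mul (by nlinarith)]
  apply Real.le_sqrt_of_sq_le
  -- the gap is `l (1 - l) (a d - b c)²`
  nlinarith [mul_nonneg (mul_nonneg hl₀ (sub_nonneg.2 hl₁)) (sq_nonneg (a * d - b * c))]

section SemiInnerProduct

variable [NormedAddCommGroup H] [InnerProductSpace ℂ H] {A : H →L[ℂ] H}

lemma innA_add_left (u v w : H) : innA A (u + v) w = innA A u w + innA A v w := by
  simp only [innA, map_add, inner_add_right]

lemma conj_innA (hA : A.IsPositive) (x y : H) : conj (innA A x y) = innA A y x := by
  rw [innA, innA, inner_conj_symm, hA.inner_left_eq_inner_right]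

lemma re_innA_self_nonneg (hA : A.IsPositive) (x : H) : 0 ≤ (innA A x x).re :=
  hA.re_inner_nonneg_right x

/-- `(x, y) ↦ ⟨y, x⟩_A`, a semi-inner product in Mathlib's convention (conjugate-linear on the
left). -/
noncomputable abbrev innACore (hA : A.IsPositive) : PreInnerProductSpace.Core ℂ H where
  inner x y := innA A y x
  conj_inner_symm x y := conj_innA hA x y
  re_inner_nonneg := re_innA_self_nonneg hA
  add_left x y z := by simp only [innA, inner_add_left]
  smul_left x y r := by simp only [innA, inner_smul_left]

lemma norm_innA_le (hA : A.IsPositive) (x y : H) : ‖innA A x y‖ ≤ normA A x * normA A y := by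
  have h := @InnerProductSpace.Core.inner_mul_inner_self_le ℂ H _ _ _ (innACore hA) y x
  change ‖innA A x y‖ * ‖innA A y x‖ ≤ (innA A y y).re * (innA A x x).re at h
  rw [← conj_innA hA x y, Complex.norm_conj] at h
  rw [normA, normA, ← Real.sqrt_mul (re_innA_self_nonneg hA x)]
  apply Real.le_sqrt_of_sq_le
  linarith

lemma normA_sq (hA : A.IsPositive) (x : H) : normA A x ^ 2 = (innA A x x).re :=
  Real.sq_sqrt (re_innA_self_nonneg hA x)

lemma normA_add_sq (hA : A.IsPositive) (u v : H) :
    normA A (u + v) ^ 2 = normA A u ^ 2 + normA A v ^ 2 + 2 * (innA A v u).re := by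
  have hsymm : (innA A u v).re = (innA A v u).re := by rw [← conj_innA hA v u, Complex.conj_re]
  rw [normA_sq hA, normA_sq hA, normA_sq hA]
  simp only [innA, map_add, inner_add_left, inner_add_right, Complex.add_re] at hsymm ⊢
  linarith

end SemiInnerProduct

section Pointwise

variable [NormedAddCommGroup H] [InnerProductSpace ℂ H] {A : H →L[ℂ] H} {l : ℝ}
  {T S : H →L[ℂ] H} {x : H}

noncomputable def crossA (A : H →L[ℂ] H) (l : ℝ) (T S : H →L[ℂ] H) (x : H) : ℂ :=
  (l : ℂ) * innA A (S x) (T x) + (1 - (l : ℂ)) * innA A x (T x) * innA A (S x) x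

lemma qA_nonneg : 0 ≤ qA A l T x := Real.sqrt_nonneg _

lemma qA_sq (hl : l ∈ Set.Icc (0 : ℝ) 1) :
    qA A l T x ^ 2 = l * normA A (T x) ^ 2 + (1 - l) * ‖innA A (T x) x‖ ^ 2 :=
  Real.sq_sqrt (by nlinarith [hl.1, hl.2, sq_nonneg (normA A (T x)), sq_nonneg ‖innA A (T x) x‖])

lemma qA_add_sq (hA : A.IsPositive) (hl : l ∈ Set.Icc (0 : ℝ) 1) :
    qA A l (T + S) x ^ 2 = qA A l T x ^ 2 + qA A l S x ^ 2 + 2 * (crossA A l T S x).re := by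
  rw [qA_sq hl, qA_sq hl, qA_sq hl, add_apply, normA_add_sq hA,
    innA_add_left, crossA, ← conj_innA hA (T x) x]
  simp only [Complex.sq_norm, Complex.normSq_apply, Complex.add_re, Complex.add_im,
    Complex.mul_re, Complex.mul_im, Complex.ofReal_re, Complex.ofReal_im, Complex.sub_re,
    Complex.sub_im, Complex.one_re, Complex.one_im, Complex.conj_re, Complex.conj_im]
  ring

lemma norm_crossA_le (hA : A.IsPositive) (hl : l ∈ Set.Icc (0 : ℝ) 1) :
    ‖crossA A l T S x‖ ≤ qA A l T x * qA A l S x := by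
  have hl' : ‖1 - (l : ℂ)‖ = 1 - l := by
    rw [← Complex.ofReal_one, ← Complex.ofReal_sub, Complex.norm_real, Real.norm_of_nonneg]
    linarith [hl.2]
  calc ‖crossA A l T S x‖
      ≤ l * (normA A (T x) * normA A (S x))
        + (1 - l) * (‖innA A (T x) x‖ * ‖innA A (S x) x‖) := by
        refine (norm_add_le _ _).trans (add_le_add ?_ (le_of_eq ?_))
        · rw [norm_mul, Complex.norm_real, Real.norm_of_nonneg hl.1, mul_comm (normA A _)]
          exact mul_le_mul_of_nonneg_left (norm_innA_le hA _ _) hl.1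
        · rw [norm_mul, norm_mul, hl', ← conj_innA hA (T x) x, Complex.norm_conj, mul_assoc]
    _ ≤ qA A l T x * qA A l S x := mul_add_one_sub_mul_le_sqrt_mul_sqrt hl _ _ _ _

lemma qA_add_le (hA : A.IsPositive) (hl : l ∈ Set.Icc (0 : ℝ) 1) :
    qA A l (T + S) x ≤ qA A l T x + qA A l S x := by
  have hre := (Complex.re_le_norm (crossA A l T S x)).trans (norm_crossA_le hA hl)
  have hsq := qA_add_sq (T := T) (S := S) (x := x) hA hl
  refine nonneg_le_nonneg_of_sq_le_sq (add_nonneg qA_nonneg qA_nonneg) ?_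
  nlinarith

lemma qA_add_eq_of_qA_eq_zero (hA : A.IsPositive) (hl : l ∈ Set.Icc (0 : ℝ) 1)
    (h : qA A l T x = 0) : qA A l (T + S) x = qA A l S x := by
  have hcross : crossA A l T S x = 0 := by
    simpa [h] using norm_crossA_le (T := T) (S := S) (x := x) hA hl
  have hsq := qA_add_sq (T := T) (S := S) (x := x) hA hl
  rw [h, hcross] at hsq
  exact (sq_eq_sq₀ qA_nonneg qA_nonneg).1 (by rw [hsq]; simp)

lemma qA_le_normA (hA : A.IsPositive) (hl : l ∈ Set.Icc (0 : ℝ) 1) (hx : normA A x = 1) :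
    qA A l T x ≤ normA A (T x) := by
  have hin : ‖innA A (T x) x‖ ≤ normA A (T x) := by
    simpa [hx] using norm_innA_le hA (T x) x
  have hsq : ‖innA A (T x) x‖ ^ 2 ≤ normA A (T x) ^ 2 :=
    pow_le_pow_left₀ (norm_nonneg _) hin 2
  refine nonneg_le_nonneg_of_sq_le_sq (Real.sqrt_nonneg _) ?_
  nlinarith [qA_sq (T := T) (x := x) (A := A) hl, hl.1, hl.2]

end Pointwise

section Seminorm

variable [NormedAddCommGroup H] [InnerProductSpace ℂ H]

abbrev qAValues (A : H →L[ℂ] H) (l : ℝ) (T : H →L[ℂ] H) : Set ℝ :=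
  {r : ℝ | ∃ x : H, normA A x = 1 ∧ r = qA A l T x}

variable {A : H →L[ℂ] H} {l : ℝ} {T S : H →L[ℂ] H} {x : H}

lemma semNormA_nonneg : 0 ≤ semNormA A l T :=
  Real.sSup_nonneg (by rintro _ ⟨x, -, rfl⟩; exact qA_nonneg)

lemma qA_le_semNormA (hT : BddAbove (qAValues A l T)) (hx : normA A x = 1) :
    qA A l T x ≤ semNormA A l T :=
  le_csSup hT ⟨x, hx, rfl⟩

lemma bddAbove_qA (hA : A.IsPositive) (hl : l ∈ Set.Icc (0 : ℝ) 1)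
    (hT : BddAbove {r : ℝ | ∃ x : H, normA A x = 1 ∧ r = normA A (T x)}) :
    BddAbove (qAValues A l T) := by
  obtain ⟨M, hM⟩ := hT
  refine ⟨M, ?_⟩
  rintro _ ⟨x, hx, rfl⟩
  exact (qA_le_normA hA hl hx).trans (hM ⟨x, hx, rfl⟩)

lemma exists_seq_tendsto_semNormA (hne : ∃ x : H, normA A x = 1)
    (hT : BddAbove (qAValues A l T)) :
    ∃ x : ℕ → H, (∀ n, normA A (x n) = 1) ∧
      Tendsto (fun n => qA A l T (x n)) atTop (𝓝 (semNormA A l T)) := by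
  obtain ⟨x₀, hx₀⟩ := hne
  obtain ⟨u, -, hu, hmem⟩ := exists_seq_tendsto_sSup
    (S := qAValues A l T) ⟨_, x₀, hx₀, rfl⟩ hT
  choose x hx hux using hmem
  exact ⟨x, hx, hu.congr hux⟩

lemma qA_add_le_semNormA_add (hA : A.IsPositive) (hl : l ∈ Set.Icc (0 : ℝ) 1)
    (hT : BddAbove (qAValues A l T))
    (hS : BddAbove (qAValues A l S))
    (hx : normA A x = 1) :
    qA A l (T + S) x ≤ semNormA A l T + semNormA A l S :=
  (qA_add_le hA hl).trans (add_le_add (qA_le_semNormA hT hx) (qA_le_semNormA hS hx))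

lemma bddAbove_qA_add (hA : A.IsPositive) (hl : l ∈ Set.Icc (0 : ℝ) 1)
    (hT : BddAbove (qAValues A l T))
    (hS : BddAbove (qAValues A l S)) : BddAbove (qAValues A l (T + S)) :=
  ⟨_, by rintro _ ⟨x, hx, rfl⟩; exact qA_add_le_semNormA_add hA hl hT hS hx⟩

lemma semNormA_add_le (hA : A.IsPositive) (hl : l ∈ Set.Icc (0 : ℝ) 1)
    (hT : BddAbove (qAValues A l T))
    (hS : BddAbove (qAValues A l S))
    (hne : ∃ x : H, normA A x = 1) :
    semNormA A l (T + S) ≤ semNormA A l T + semNormA A l S := by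
  obtain ⟨x₀, hx₀⟩ := hne
  exact csSup_le ⟨_, x₀, hx₀, rfl⟩ (by
    rintro _ ⟨x, hx, rfl⟩; exact qA_add_le_semNormA_add hA hl hT hS hx)

lemma semNormA_add_of_semNormA_eq_zero (hA : A.IsPositive) (hl : l ∈ Set.Icc (0 : ℝ) 1)
    (hT : BddAbove (qAValues A l T)) (h : semNormA A l T = 0) :
    semNormA A l (T + S) = semNormA A l S := by
  have hq : ∀ x, normA A x = 1 → qA A l (T + S) x = qA A l S x := fun x hx =>
    qA_add_eq_of_qA_eq_zero hA hl (le_antisymm (h ▸ qA_le_semNormA hT hx) qA_nonneg)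
  unfold semNormA
  congr 1
  ext r
  exact ⟨fun ⟨x, hx, hr⟩ => ⟨x, hx, hr.trans (hq x hx)⟩,
    fun ⟨x, hx, hr⟩ => ⟨x, hx, hr.trans (hq x hx).symm⟩⟩

lemma exists_tendsto_crossA_of_semNormA_add_eq (hA : A.IsPositive) (hl : l ∈ Set.Icc (0 : ℝ) 1)
    (hT : BddAbove (qAValues A l T))
    (hS : BddAbove (qAValues A l S))
    (hne : ∃ x : H, normA A x = 1)
    (heq : semNormA A l (T + S) = semNormA A l T + semNormA A l S) :
    ∃ x : ℕ → H, (∀ n, normA A (x n) = 1) ∧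
      Tendsto (fun n => crossA A l T S (x n)) atTop
        (𝓝 ((semNormA A l T * semNormA A l S : ℝ) : ℂ)) := by
  obtain ⟨x, hx, hlim⟩ := exists_seq_tendsto_semNormA hne (bddAbove_qA_add hA hl hT hS)
  rw [heq] at hlim
  have hle : ∀ n, qA A l (T + S) (x n) ≤ qA A l T (x n) + qA A l S (x n) :=
    fun n => qA_add_le hA hl
  have hTlim : Tendsto (fun n => qA A l T (x n)) atTop (𝓝 (semNormA A l T)) :=
    tendsto_left_of_le_add (fun n => qA_le_semNormA hT (hx n))
      (fun n => qA_le_semNormA hS (hx n)) hle hlim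
  have hSlim : Tendsto (fun n => qA A l S (x n)) atTop (𝓝 (semNormA A l S)) :=
    tendsto_left_of_le_add (fun n => qA_le_semNormA hS (hx n))
      (fun n => qA_le_semNormA hT (hx n)) (fun n => (hle n).trans_eq (add_comm _ _))
      (by rwa [add_comm (semNormA A l T)] at hlim)
  have hre : Tendsto (fun n => (crossA A l T S (x n)).re) atTop
      (𝓝 (semNormA A l T * semNormA A l S)) := by
    have h := (((hlim.pow 2).sub (hTlim.pow 2)).sub (hSlim.pow 2)).div_const 2
    rw [show ((semNormA A l T + semNormA A l S) ^ 2 - semNormA A l T ^ 2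
      - semNormA A l S ^ 2) / 2 = semNormA A l T * semNormA A l S by ring] at h
    refine h.congr fun n => ?_
    rw [qA_add_sq hA hl]
    ring
  exact ⟨x, hx, tendsto_ofReal_of_tendsto_re hre (hTlim.mul hSlim)
    fun n => norm_crossA_le hA hl⟩

lemma le_semNormA_add_of_tendsto_crossA (hA : A.IsPositive) (hl : l ∈ Set.Icc (0 : ℝ) 1)
    (hT : BddAbove (qAValues A l T))
    (hS : BddAbove (qAValues A l S))
    (hTpos : 0 < semNormA A l T) (hSpos : 0 < semNormA A l S)
    {x : ℕ → H} (hx : ∀ n, normA A (x n) = 1)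
    (hlim : Tendsto (fun n => crossA A l T S (x n)) atTop
      (𝓝 ((semNormA A l T * semNormA A l S : ℝ) : ℂ))) :
    semNormA A l T + semNormA A l S ≤ semNormA A l (T + S) := by
  have hre : Tendsto (fun n => (crossA A l T S (x n)).re) atTop
      (𝓝 (semNormA A l T * semNormA A l S)) := by
    simpa only [Function.comp_def, Complex.ofReal_re] using
      (Complex.continuous_re.tendsto _).comp hlim
  have hle : ∀ n, (crossA A l T S (x n)).re ≤ qA A l T (x n) * qA A l S (x n) :=
    fun n => (Complex.re_le_norm _).trans (norm_crossA_le hA hl)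
  have hTlim : Tendsto (fun n => qA A l T (x n)) atTop (𝓝 (semNormA A l T)) :=
    tendsto_left_of_le_mul hSpos (fun n => qA_nonneg) (fun n => qA_le_semNormA hT (hx n))
      (fun n => qA_le_semNormA hS (hx n)) hle hre
  have hSlim : Tendsto (fun n => qA A l S (x n)) atTop (𝓝 (semNormA A l S)) :=
    tendsto_left_of_le_mul hTpos (fun n => qA_nonneg) (fun n => qA_le_semNormA hS (hx n))
      (fun n => qA_le_semNormA hT (hx n)) (fun n => (hle n).trans_eq (mul_comm _ _))
      (by rwa [mul_comm] at hre)
  have hsq : Tendsto (fun n => qA A l (T + S) (x n) ^ 2) atTop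
      (𝓝 ((semNormA A l T + semNormA A l S) ^ 2)) := by
    have h := ((hTlim.pow 2).add (hSlim.pow 2)).add (hre.const_mul 2)
    rw [show semNormA A l T ^ 2 + semNormA A l S ^ 2 + 2 * (semNormA A l T * semNormA A l S)
      = (semNormA A l T + semNormA A l S) ^ 2 by ring] at h
    exact h.congr fun n => (qA_add_sq hA hl).symm
  have hsum : Tendsto (fun n => qA A l (T + S) (x n)) atTop
      (𝓝 (semNormA A l T + semNormA A l S)) := by
    simpa [Real.sqrt_sq qA_nonneg, Real.sqrt_sq (add_nonneg hTpos.le hSpos.le)] using hsq.sqrt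
  exact le_of_tendsto' hsum fun n => qA_le_semNormA (bddAbove_qA_add hA hl hT hS) (hx n)

end Seminorm

theorem semNormA_add_eq_iff_general
    [NormedAddCommGroup H] [InnerProductSpace ℂ H]
    (A : H →L[ℂ] H) (hA : A.IsPositive) {l : ℝ} (hl : l ∈ Set.Icc (0 : ℝ) 1)
    (T S : H →L[ℂ] H) (hT : BddAbove {r : ℝ | ∃ x : H, normA A x = 1 ∧ r = normA A (T x)}) (hS : BddAbove {r : ℝ | ∃ x : H, normA A x = 1 ∧ r = normA A (S x)})
    (hne : ∃ x : H, normA A x = 1) :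
    semNormA A l (T + S) = semNormA A l T + semNormA A l S ↔
      ∃ x : ℕ → H, (∀ n, normA A (x n) = 1) ∧
        Tendsto (fun n => (l : ℂ) * innA A (S (x n)) (T (x n)) + ((1 : ℂ) - (l : ℂ)) * innA A (x n) (T (x n)) * innA A (S (x n)) (x n))
          atTop (𝓝 ((semNormA A l T * semNormA A l S : ℝ) : ℂ)) := by
  have hT' := bddAbove_qA hA hl hT
  have hS' := bddAbove_qA hA hl hS
  refine ⟨exists_tendsto_crossA_of_semNormA_add_eq hA hl hT' hS' hne, ?_⟩
  rintro ⟨x, hx, hlim⟩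
  refine le_antisymm (semNormA_add_le hA hl hT' hS' hne) ?_
  rcases (semNormA_nonneg (T := T)).eq_or_lt with hT0 | hTpos
  · rw [← hT0, zero_add, semNormA_add_of_semNormA_eq_zero hA hl hT' hT0.symm]
  rcases (semNormA_nonneg (T := S)).eq_or_lt with hS0 | hSpos
  · rw [← hS0, add_zero, add_comm T S, semNormA_add_of_semNormA_eq_zero hA hl hS' hS0.symm]
  exact le_semNormA_add_of_tendsto_crossA hA hl hT' hS' hTpos hSpos hx hlim

theorem semNormA_add_eq_iff
    [NormedAddCommGroup H] [InnerProductSpace ℂ H] [CompleteSpace H]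
    (A : H →L[ℂ] H) (hA : A.IsPositive) {l : ℝ} (hl : l ∈ Set.Icc (0 : ℝ) 1)
    (T S : H →L[ℂ] H) (hT : BddAbove {r : ℝ | ∃ x : H, normA A x = 1 ∧ r = normA A (T x)}) (hS : BddAbove {r : ℝ | ∃ x : H, normA A x = 1 ∧ r = normA A (S x)})
    (hne : ∃ x : H, normA A x = 1) :
    semNormA A l (T + S) = semNormA A l T + semNormA A l S ↔
      ∃ x : ℕ → H, (∀ n, normA A (x n) = 1) ∧
        Tendsto (fun n => (l : ℂ) * innA A (S (x n)) (T (x n)) + ((1 : ℂ) - (l : ℂ)) * innA A (x n) (T (x n)) * innA A (S (x n)) (x n))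
          atTop (𝓝 ((semNormA A l T * semNormA A l S : ℝ) : ℂ)) :=
  semNormA_add_eq_iff_general A hA hl T S hT hS hne
end

section
/- For bounded operators T, S on a complex Hilbert space H, T is Birkhoff–James numerical radius orthogonal to S (w(T+ξS) ≥ w(T) for all ξ ∈ ℂ) if and only if for each θ ∈ [0,2π) there exists a sequence {x_n} of unit vectors with lim_{n→∞} |⟨Tx_n, x_n⟩| = w(T) and liminf_{n→∞} Re( e^{iθ}⟨x_n, Tx_n⟩⟨Sx_n, x_n⟩ ) ≥ 0. -/
open Filter Topology

/-- The numerical radius `w(T) = sup {|⟨Tx, x⟩| : ‖x‖ = 1}` (paper convention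
`⟨Tx, x⟩` corresponds to Mathlib's `⟪ x, T x ⟫`). -/
noncomputable def numRad {H : Type*} [NormedAddCommGroup H] [InnerProductSpace ℂ H]
    (T : H →L[ℂ] H) : ℝ :=
  sSup {r : ℝ | ∃ x : H, ‖x‖ = 1 ∧ r = ‖(@inner ℂ H _ x (T x))‖}

/-!
Write `ξ = t e^{iθ}` with `t ≥ 0`. For a unit vector `x`,
`|⟨(T + ξS)x, x⟩|² = |⟨Tx, x⟩|² + t² |⟨Sx, x⟩|² + 2t Re(e^{iθ} ⟨x, Tx⟩⟨Sx, x⟩)`.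
If the real part is asymptotically nonnegative along a sequence on which `|⟨Tx, x⟩| → w(T)`,
then `w(T + ξS)² ≥ w(T)²`. Conversely, testing `w(T + t e^{iθ} S) ≥ w(T)` with `t = 1/(n+1)` on
an almost-maximizing unit vector `x_n` of `T + t e^{iθ} S` shows that `|⟨Tx_n, x_n⟩|² ≥ w(T)² - O(t)`
and that the real part is `≥ -O(t)`.
-/

open scoped InnerProductSpace ComplexConjugate

lemma Complex.exists_mem_Ico_eq_norm_mul_exp (ξ : ℂ) :
    ∃ θ ∈ Set.Ico (0 : ℝ) (2 * Real.pi), ξ = ‖ξ‖ * Complex.exp (θ * Complex.I) := by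
  refine ⟨toIcoMod Real.two_pi_pos 0 ξ.arg, toIcoMod_mem_Ico' _ _, ?_⟩
  have h := Complex.exp_mul_I_periodic.sub_zsmul_eq (x := (ξ.arg : ℂ))
    (toIcoDiv Real.two_pi_pos 0 ξ.arg)
  rw [zsmul_eq_mul] at h
  rw [← self_sub_toIcoDiv_zsmul, zsmul_eq_mul]
  push_cast
  rw [h, Complex.norm_mul_exp_arg_mul_I]

lemma Complex.norm_add_mul_sq (a b ξ : ℂ) :
    ‖a + ξ * b‖ ^ 2 = ‖a‖ ^ 2 + ‖ξ‖ ^ 2 * ‖b‖ ^ 2 + 2 * (ξ * (conj a * b)).re := by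
  simp only [Complex.sq_norm, Complex.normSq_apply, Complex.add_re, Complex.add_im,
    Complex.mul_re, Complex.mul_im, Complex.conj_re, Complex.conj_im]
  ring

lemma zero_le_liminf_iff_of_abs_le {α : Type*} {f : Filter α} [f.NeBot] {u : α → ℝ} {C : ℝ}
    (hu : ∀ a, |u a| ≤ C) : 0 ≤ liminf u f ↔ ∀ ε > 0, ∀ᶠ a in f, -ε ≤ u a := by
  have hle : IsBoundedUnder (· ≤ ·) f u := isBoundedUnder_of ⟨C, fun a => (abs_le.mp (hu a)).2⟩
  have hge : IsBoundedUnder (· ≥ ·) f u := isBoundedUnder_of ⟨-C, fun a => (abs_le.mp (hu a)).1⟩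
  rw [le_liminf_iff' hle.isCoboundedUnder_ge hge]
  exact ⟨fun h ε hε => h (-ε) (neg_lt_zero.mpr hε),
    fun h y hy => by simpa using h (-y) (neg_pos.mpr hy)⟩

section NumericalRadius

variable {H : Type*} [NormedAddCommGroup H] [InnerProductSpace ℂ H]

lemma norm_inner_apply_le_opNorm (T : H →L[ℂ] H) {x : H} (hx : ‖x‖ = 1) :
    ‖⟪x, T x⟫_ℂ‖ ≤ ‖T‖ := by
  simpa [hx] using (norm_inner_le_norm x (T x)).trans
    (mul_le_mul_of_nonneg_left (T.le_opNorm x) (norm_nonneg x))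

lemma abs_re_exp_mul_inner_mul_inner_le (T S : H →L[ℂ] H) (θ : ℝ) {x : H} (hx : ‖x‖ = 1) :
    |(Complex.exp (θ * Complex.I) * (⟪T x, x⟫_ℂ * ⟪x, S x⟫_ℂ)).re| ≤ ‖T‖ * ‖S‖ :=
  calc _ ≤ ‖Complex.exp (θ * Complex.I) * (⟪T x, x⟫_ℂ * ⟪x, S x⟫_ℂ)‖ := Complex.abs_re_le_norm _
    _ = ‖⟪x, T x⟫_ℂ‖ * ‖⟪x, S x⟫_ℂ‖ := by
      rw [norm_mul, norm_mul, Complex.norm_exp_ofReal_mul_I, one_mul, norm_inner_symm]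
    _ ≤ ‖T‖ * ‖S‖ := mul_le_mul (norm_inner_apply_le_opNorm T hx)
      (norm_inner_apply_le_opNorm S hx) (norm_nonneg _) (norm_nonneg T)

lemma norm_inner_add_polar_smul_apply_sq (T S : H →L[ℂ] H) (t θ : ℝ) (x : H) :
    ‖⟪x, (T + ((t : ℂ) * Complex.exp (θ * Complex.I)) • S) x⟫_ℂ‖ ^ 2
      = ‖⟪x, T x⟫_ℂ‖ ^ 2 + t ^ 2 * ‖⟪x, S x⟫_ℂ‖ ^ 2
        + 2 * t * (Complex.exp (θ * Complex.I) * (⟪T x, x⟫_ℂ * ⟪x, S x⟫_ℂ)).re := by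
  rw [add_apply, smul_apply, inner_add_right, inner_smul_right, Complex.norm_add_mul_sq,
    inner_conj_symm, norm_mul, Complex.norm_exp_ofReal_mul_I, mul_one, Complex.norm_real, Real.norm_eq_abs, sq_abs,
    mul_assoc (t : ℂ), Complex.re_ofReal_mul]
  ring

lemma numRad_bddAbove (T : H →L[ℂ] H) :
    BddAbove {r : ℝ | ∃ x : H, ‖x‖ = 1 ∧ r = ‖⟪x, T x⟫_ℂ‖} :=
  ⟨‖T‖, by rintro r ⟨x, hx, rfl⟩; exact norm_inner_apply_le_opNorm T hx⟩

lemma norm_inner_le_numRad (T : H →L[ℂ] H) {x : H} (hx : ‖x‖ = 1) :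
    ‖⟪x, T x⟫_ℂ‖ ≤ numRad T :=
  le_csSup (numRad_bddAbove T) ⟨x, hx, rfl⟩

lemma numRad_nonneg (T : H →L[ℂ] H) : 0 ≤ numRad T := by
  refine Real.sSup_nonneg ?_
  rintro r ⟨x, -, rfl⟩
  exact norm_nonneg _

lemma exists_numRad_sub_lt_norm_inner [Nontrivial H] (T : H →L[ℂ] H) {ε : ℝ} (hε : 0 < ε) :
    ∃ x : H, ‖x‖ = 1 ∧ numRad T - ε < ‖⟪x, T x⟫_ℂ‖ := by
  obtain ⟨x, hx⟩ := exists_norm_eq H zero_le_one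
  obtain ⟨r, ⟨y, hy, rfl⟩, hr⟩ := exists_lt_of_lt_csSup
    (s := {r : ℝ | ∃ x : H, ‖x‖ = 1 ∧ r = ‖⟪x, T x⟫_ℂ‖}) ⟨_, x, hx, rfl⟩ (sub_lt_self _ hε)
  exact ⟨y, hy, hr⟩

lemma numRad_le_numRad_add_of_seq (T S : H →L[ℂ] H) {t : ℝ} (ht : 0 ≤ t) (θ : ℝ)
    (x : ℕ → H) (hx : ∀ n, ‖x n‖ = 1)
    (hT : Tendsto (fun n => ‖⟪x n, T (x n)⟫_ℂ‖) atTop (𝓝 (numRad T)))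
    (hre : 0 ≤ liminf (fun n => (Complex.exp (θ * Complex.I) *
      (⟪T (x n), x n⟫_ℂ * ⟪x n, S (x n)⟫_ℂ)).re) atTop) :
    numRad T ≤ numRad (T + ((t : ℂ) * Complex.exp (θ * Complex.I)) • S) := by
  set A := T + ((t : ℂ) * Complex.exp (θ * Complex.I)) • S
  set r : ℕ → ℝ := fun n => (Complex.exp (θ * Complex.I) *
    (⟪T (x n), x n⟫_ℂ * ⟪x n, S (x n)⟫_ℂ)).re
  have hbound : ∀ n, ‖⟪x n, T (x n)⟫_ℂ‖ ^ 2 + 2 * t * r n ≤ numRad A ^ 2 := fun n => by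
    have hA := pow_le_pow_left₀ (norm_nonneg _) (norm_inner_le_numRad A (hx n)) 2
    rw [norm_inner_add_polar_smul_apply_sq] at hA
    nlinarith [sq_nonneg ‖⟪x n, S (x n)⟫_ℂ‖]
  rw [zero_le_liminf_iff_of_abs_le fun n => abs_re_exp_mul_inner_mul_inner_le T S θ (hx n)] at hre
  refine (pow_le_pow_iff_left₀ (numRad_nonneg T) (numRad_nonneg A) two_ne_zero).mp
    (le_of_forall_pos_lt_add fun ε hε => ?_)
  obtain ⟨n, hnT, hnr⟩ := (((hT.pow 2).eventually (lt_mem_nhds (sub_lt_self _ (half_pos hε)))).and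
    (hre (ε / (4 * t + 4)) (by positivity))).exists
  have hδ : 2 * t * (ε / (4 * t + 4)) < ε / 2 := by
    rw [mul_div_assoc', div_lt_div_iff₀ (by positivity) two_pos]
    nlinarith
  nlinarith [hbound n, mul_le_mul_of_nonneg_left hnr (by positivity : 0 ≤ 2 * t)]

lemma exists_near_numRad_of_numRad_le [Nontrivial H] (T S : H →L[ℂ] H) {t : ℝ} (θ : ℝ)
    (ht₀ : 0 < t) (ht₁ : t ≤ 1)
    (h : numRad T ≤ numRad (T + ((t : ℂ) * Complex.exp (θ * Complex.I)) • S)) :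
    ∃ x : H, ‖x‖ = 1 ∧
      numRad T ^ 2 - t * (2 * numRad T + ‖S‖ ^ 2 + 2 * ‖T‖ * ‖S‖) ≤ ‖⟪x, T x⟫_ℂ‖ ^ 2 ∧
      -(t * (2 * numRad T + ‖S‖ ^ 2 + 2 * ‖T‖ * ‖S‖)) ≤
        (Complex.exp (θ * Complex.I) * (⟪T x, x⟫_ℂ * ⟪x, S x⟫_ℂ)).re := by
  set A := T + ((t : ℂ) * Complex.exp (θ * Complex.I)) • S
  obtain ⟨x, hx, hAx⟩ := exists_numRad_sub_lt_norm_inner A (pow_pos ht₀ 2)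
  have hw := numRad_nonneg T
  have hTx := norm_inner_le_numRad T hx
  have hSx := norm_inner_apply_le_opNorm S hx
  have hr := abs_le.mp (abs_re_exp_mul_inner_mul_inner_le T S θ hx)
  have hA : numRad T ^ 2 - 2 * t ^ 2 * numRad T ≤ ‖⟪x, A x⟫_ℂ‖ ^ 2 := by
    rcases le_or_gt (t ^ 2) (numRad T) with hwt | hwt
    · nlinarith [pow_le_pow_left₀ (sub_nonneg.mpr hwt) (show numRad T - t ^ 2 ≤ ‖⟪x, A x⟫_ℂ‖ by
        linarith) 2]
    · nlinarith [sq_nonneg ‖⟪x, A x⟫_ℂ‖]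
  rw [norm_inner_add_polar_smul_apply_sq] at hA
  have ht2 : t ^ 2 ≤ t := by nlinarith
  have hSx2 : ‖⟪x, S x⟫_ℂ‖ ^ 2 ≤ ‖S‖ ^ 2 := pow_le_pow_left₀ (norm_nonneg _) hSx 2
  have hTx2 : ‖⟪x, T x⟫_ℂ‖ ^ 2 ≤ numRad T ^ 2 := pow_le_pow_left₀ (norm_nonneg _) hTx 2
  have hTS : 0 ≤ ‖T‖ * ‖S‖ := mul_nonneg (norm_nonneg T) (norm_nonneg S)
  refine ⟨x, hx, ?_, ?_⟩
  · nlinarith [mul_le_mul_of_nonneg_left hr.2 ht₀.le, mul_le_mul_of_nonneg_right ht2 hw,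
      mul_le_mul_of_nonneg_left hSx2 (sq_nonneg t), mul_le_mul_of_nonneg_right ht2 (sq_nonneg ‖S‖)]
  · refine le_of_mul_le_mul_left ?_ (mul_pos two_pos ht₀)
    nlinarith [mul_le_mul_of_nonneg_left hSx2 (sq_nonneg t), mul_nonneg (sq_nonneg t) hTS,
      mul_nonneg (sq_nonneg t) hw]

lemma exists_seq_of_forall_numRad_le [Nontrivial H] (T S : H →L[ℂ] H) (θ : ℝ)
    (h : ∀ t : ℝ, 0 < t → numRad T ≤ numRad (T + ((t : ℂ) * Complex.exp (θ * Complex.I)) • S)) :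
    ∃ x : ℕ → H, (∀ n, ‖x n‖ = 1) ∧
      Tendsto (fun n => ‖⟪x n, T (x n)⟫_ℂ‖) atTop (𝓝 (numRad T)) ∧
      0 ≤ liminf (fun n => (Complex.exp (θ * Complex.I) *
        (⟪T (x n), x n⟫_ℂ * ⟪x n, S (x n)⟫_ℂ)).re) atTop := by
  set C := 2 * numRad T + ‖S‖ ^ 2 + 2 * ‖T‖ * ‖S‖
  choose x hx hT hre using fun n : ℕ =>
    have htn : 0 < 1 / ((n : ℝ) + 1) := Nat.one_div_pos_of_nat
    exists_near_numRad_of_numRad_le T S θ htn (div_le_one_of_le₀ (by simp) (by positivity))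
      (h _ htn)
  have herr : Tendsto (fun n : ℕ => 1 / ((n : ℝ) + 1) * C) atTop (𝓝 0) := by
    simpa using tendsto_one_div_add_atTop_nhds_zero_nat.mul_const C
  refine ⟨x, hx, ?_, ?_⟩
  · have hsq : Tendsto (fun n => ‖⟪x n, T (x n)⟫_ℂ‖ ^ 2) atTop (𝓝 (numRad T ^ 2)) :=
      tendsto_of_tendsto_of_tendsto_of_le_of_le (by simpa using tendsto_const_nhds.sub herr)
        tendsto_const_nhds hT
        fun n => pow_le_pow_left₀ (norm_nonneg _) (norm_inner_le_numRad T (hx n)) 2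
    simpa [Real.sqrt_sq (norm_nonneg _), Real.sqrt_sq (numRad_nonneg T)] using hsq.sqrt
  · rw [zero_le_liminf_iff_of_abs_le fun n => abs_re_exp_mul_inner_mul_inner_le T S θ (hx n)]
    intro ε hε
    filter_upwards [herr.eventually (gt_mem_nhds hε)] with n hn
    linarith [hre n]

end NumericalRadius

theorem numRad_BJ_orthogonal_iff_exists_seq_general
    {H : Type*} [NormedAddCommGroup H] [InnerProductSpace ℂ H]
    [Nontrivial H] (T S : H →L[ℂ] H) :
    (∀ ξ : ℂ, numRad T ≤ numRad (T + ξ • S)) ↔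
      ∀ θ ∈ Set.Ico (0 : ℝ) (2 * Real.pi),
        ∃ x : ℕ → H, (∀ n, ‖x n‖ = 1) ∧
          Tendsto (fun n => ‖(@inner ℂ H _ (x n) (T (x n)))‖) atTop
            (𝓝 (numRad T)) ∧
          0 ≤ Filter.liminf
            (fun n => (Complex.exp (θ * Complex.I) *
              (@inner ℂ H _ (T (x n)) (x n) * @inner ℂ H _ (x n) (S (x n)))).re) atTop := by
  refine ⟨fun h θ _ => exists_seq_of_forall_numRad_le T S θ fun _ _ => h _, fun h ξ => ?_⟩
  obtain ⟨θ, hθ, hξ⟩ := Complex.exists_mem_Ico_eq_norm_mul_exp ξ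
  obtain ⟨x, hx, hT, hre⟩ := h θ hθ
  rw [hξ]
  exact numRad_le_numRad_add_of_seq T S (norm_nonneg ξ) θ x hx hT hre

theorem numRad_BJ_orthogonal_iff_exists_seq
    {H : Type*} [NormedAddCommGroup H] [InnerProductSpace ℂ H] [CompleteSpace H]
    [Nontrivial H] (T S : H →L[ℂ] H) :
    (∀ ξ : ℂ, numRad T ≤ numRad (T + ξ • S)) ↔
      ∀ θ ∈ Set.Ico (0 : ℝ) (2 * Real.pi),
        ∃ x : ℕ → H, (∀ n, ‖x n‖ = 1) ∧
          Tendsto (fun n => ‖(@inner ℂ H _ (x n) (T (x n)))‖) atTop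
            (𝓝 (numRad T)) ∧
          0 ≤ Filter.liminf
            (fun n => (Complex.exp (θ * Complex.I) *
              (@inner ℂ H _ (T (x n)) (x n) * @inner ℂ H _ (x n) (S (x n)))).re) atTop :=
  numRad_BJ_orthogonal_iff_exists_seq_general T S
end
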